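/- arXiv:2402.15256 — 6 statements merged into one kernel-verified Lean document; each statement's English description precedes it below -/
import Mathlib

section
/- Let C be a symmetric positive definite dX × dX real matrix, D a symmetric dX × dX real matrix, and Hx a dY × dX real matrix with dY ≤ dX and rank dY. Set V = Hx C Hx*. Then Tr(V^{-1} Hx D Hx* V^{-1} Hx D Hx*) ≤ Tr(C^{-1} D C^{-1} D). -/
/-!
Put `G = Hxᵀ V⁻¹ Hx`. Then `G C G = G` (even for singular `V`, since `V⁻¹ V V⁻¹ = V⁻¹` also holds
for the junk inverse `0`), so both `G` and `R = C⁻¹ - G` satisfy `X C X = X` and are positive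
semidefinite, being of the form `Xᴴ C X`. The gap `tr(C⁻¹DC⁻¹D) - tr(GDGD)` equals
`tr((C⁻¹ + G) (D R D))`, the trace of a product of two positive semidefinite matrices.
-/

open Matrix

namespace Matrix

open scoped ComplexOrder

variable {𝕜 n : Type*} [RCLike 𝕜] [Fintype n]

lemma posSemidef_of_mul_mul_eq_self {C G : Matrix n n 𝕜} (hC : C.PosSemidef)
    (hG : G.IsHermitian) (hGCG : G * C * G = G) : G.PosSemidef := by
  simpa [hG.eq, hGCG] using hC.conjTranspose_mul_mul_same G

variable [DecidableEq n]

lemma PosSemidef.trace_mul_nonneg {A B : Matrix n n 𝕜} (hA : A.PosSemidef) (hB : B.PosSemidef) :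
    0 ≤ (A * B).trace := by
  open scoped MatrixOrder in
  obtain ⟨X, rfl⟩ := CStarAlgebra.nonneg_iff_eq_star_mul_self.mp hB.nonneg
  rw [star_eq_conjTranspose, ← Matrix.mul_assoc, trace_mul_comm, ← Matrix.mul_assoc]
  exact (hA.mul_mul_conjTranspose_same X).trace_nonneg

lemma nonsing_inv_mul_self_mul_nonsing_inv (A : Matrix n n 𝕜) : A⁻¹ * A * A⁻¹ = A⁻¹ := by
  by_cases hA : IsUnit A.det
  · rw [nonsing_inv_mul A hA, Matrix.one_mul]
  · simp [nonsing_inv_apply_not_isUnit A hA]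

lemma trace_mul_mul_mul_le_inv_of_mul_mul_eq_self {C D G : Matrix n n 𝕜} (hC : C.PosDef)
    (hD : D.IsHermitian) (hG : G.IsHermitian) (hGCG : G * C * G = G) :
    (G * D * G * D).trace ≤ (C⁻¹ * D * C⁻¹ * D).trace := by
  set K := C⁻¹
  have hC_det : IsUnit C.det := (isUnit_iff_isUnit_det C).mp hC.isUnit
  have hKC : K * C = 1 := nonsing_inv_mul C hC_det
  have hCK : C * K = 1 := mul_nonsing_inv C hC_det
  have hRCR : (K - G) * C * (K - G) = K - G := by
    simp only [sub_mul, mul_sub, hGCG, hKC, Matrix.one_mul, Matrix.mul_assoc, hCK, Matrix.mul_one]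
    abel
  have hR : (K - G).PosSemidef :=
    posSemidef_of_mul_mul_eq_self hC.posSemidef (hC.isHermitian.inv.sub hG) hRCR
  have hDRD : (D * (K - G) * D).PosSemidef := by
    simpa [hD.eq] using hR.conjTranspose_mul_mul_same D
  have hKG : (K + G).PosSemidef :=
    hC.inv.posSemidef.add (posSemidef_of_mul_mul_eq_self hC.posSemidef hG hGCG)
  have hgap : (K * D * K * D).trace - (G * D * G * D).trace =
      ((K + G) * (D * (K - G) * D)).trace := by
    have hcross : (G * D * (K * D)).trace = (K * D * (G * D)).trace := trace_mul_comm _ _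
    simp only [add_mul, mul_sub, sub_mul, trace_add, trace_sub, ← Matrix.mul_assoc] at hcross ⊢
    rw [hcross]
    abel
  exact sub_nonneg.mp (hgap ▸ hKG.trace_mul_nonneg hDRD)

end Matrix

theorem information_comparison_general
    (dY dX : ℕ)
    (C D : Matrix (Fin dX) (Fin dX) ℝ)
    (hC : C.PosDef) (hD : Dᵀ = D)
    (Hx : Matrix (Fin dY) (Fin dX) ℝ) :
    let V : Matrix (Fin dY) (Fin dY) ℝ := Hx * C * Hxᵀ
    (V⁻¹ * (Hx * D * Hxᵀ) * V⁻¹ * (Hx * D * Hxᵀ)).trace ≤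
      (C⁻¹ * D * C⁻¹ * D).trace := by
  intro V
  have hD_herm : D.IsHermitian := by rwa [IsHermitian, conjTranspose_eq_transpose_of_trivial]
  have hV : V.IsHermitian := by simpa using isHermitian_mul_mul_conjTranspose Hx hC.isHermitian
  set G := Hxᵀ * V⁻¹ * Hx
  have hG : G.IsHermitian := by simpa using isHermitian_conjTranspose_mul_mul Hx hV.inv
  have hGCG : G * C * G = G := calc
    G * C * G = Hxᵀ * (V⁻¹ * V * V⁻¹) * Hx := by simp only [G, V, Matrix.mul_assoc]
    _ = G := by rw [nonsing_inv_mul_self_mul_nonsing_inv]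
  have hLHS : (V⁻¹ * (Hx * D * Hxᵀ) * V⁻¹ * (Hx * D * Hxᵀ)).trace = (G * D * G * D).trace := by
    rw [show G * D * G * D = Hxᵀ * (V⁻¹ * (Hx * D * Hxᵀ) * V⁻¹ * (Hx * D)) by
      simp only [G, Matrix.mul_assoc], trace_mul_comm Hxᵀ]
    simp only [Matrix.mul_assoc]
  rw [hLHS]
  exact trace_mul_mul_mul_le_inv_of_mul_mul_eq_self hC hD_herm hG hGCG

theorem information_comparison
    (dY dX : ℕ) (hdim : dY ≤ dX)
    (C D : Matrix (Fin dX) (Fin dX) ℝ)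
    (hC : C.PosDef) (hD : Dᵀ = D)
    (Hx : Matrix (Fin dY) (Fin dX) ℝ) (hrank : Hx.rank = dY) :
    let V : Matrix (Fin dY) (Fin dY) ℝ := Hx * C * Hxᵀ
    (V⁻¹ * (Hx * D * Hxᵀ) * V⁻¹ * (Hx * D * Hxᵀ)).trace ≤
      (C⁻¹ * D * C⁻¹ * D).trace :=
  information_comparison_general dY dX C D hC hD Hx
end

section
/- Let C be an invertible dX × dX real matrix, Hx a dY × dX matrix with V = Hx C Hx* invertible, and S = [[C, (1/2) C Hx*], [(1/2) Hx C, (1/3) V]]. Then for every v ∈ ℝ^{dY}, the quadratic form of S^{-1} at the vector (0, v) ∈ ℝ^{dX+dY} equals 12 · v* V^{-1} v. -/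
open Matrix

theorem quadratic_form_zero_v
    (dY dX : ℕ) (C : Matrix (Fin dX) (Fin dX) ℝ)
    (Hx : Matrix (Fin dY) (Fin dX) ℝ)
    (hC : IsUnit C.det) (hV : IsUnit (Hx * C * Hxᵀ).det)
    (v : Fin dY → ℝ) :
    let V : Matrix (Fin dY) (Fin dY) ℝ := Hx * C * Hxᵀ
    let S : Matrix (Fin dX ⊕ Fin dY) (Fin dX ⊕ Fin dY) ℝ :=
      Matrix.fromBlocks C ((1/2 : ℝ) • (C * Hxᵀ)) ((1/2 : ℝ) • (Hx * C)) ((1/3 : ℝ) • V)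
    let w : (Fin dX ⊕ Fin dY) → ℝ := Sum.elim 0 v
    w ⬝ᵥ S⁻¹.mulVec w = 12 * (v ⬝ᵥ V⁻¹.mulVec v) := by
  intro V S w
  have hC1 : C * C⁻¹ = 1 := mul_nonsing_inv _ hC
  have hV1 : V * V⁻¹ = 1 := mul_nonsing_inv _ hV
  have hA : Hx * (C * C⁻¹) = Hx := by rw [hC1, Matrix.mul_one]
  have hB : V * (V⁻¹ * Hx) = Hx := by rw [← Matrix.mul_assoc, hV1, Matrix.one_mul]
  have hB' : Hx * (C * (Hxᵀ * (V⁻¹ * Hx))) = Hx := by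
    rw [← Matrix.mul_assoc, ← Matrix.mul_assoc]; exact hB
  have hD' : Hx * (C * (Hxᵀ * V⁻¹)) = 1 := by
    rw [← Matrix.mul_assoc, ← Matrix.mul_assoc]; exact hV1
  set T : Matrix (Fin dX ⊕ Fin dY) (Fin dX ⊕ Fin dY) ℝ :=
    Matrix.fromBlocks (C⁻¹ + (3:ℝ) • (Hxᵀ * (V⁻¹ * Hx))) ((-6:ℝ) • (Hxᵀ * V⁻¹))
      ((-6:ℝ) • (V⁻¹ * Hx)) ((12:ℝ) • V⁻¹) with hT
  have hST : S * T = 1 := by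
    rw [show S = Matrix.fromBlocks C ((1/2 : ℝ) • (C * Hxᵀ)) ((1/2 : ℝ) • (Hx * C)) ((1/3 : ℝ) • V) from rfl,
      hT, Matrix.fromBlocks_multiply, ← Matrix.fromBlocks_one]
    rw [Matrix.fromBlocks_inj]
    refine ⟨?_, ?_, ?_, ?_⟩ <;>
      simp only [Matrix.mul_add, Matrix.mul_smul, Matrix.smul_mul, smul_smul,
        Matrix.mul_assoc, hC1, hA, hB, hB', hD', hV1, Matrix.mul_one] <;>
      module
  have hSinv : S⁻¹ = T := Matrix.inv_eq_right_inv hST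
  rw [hSinv, hT]
  have hmv : Matrix.mulVec (Matrix.fromBlocks (C⁻¹ + (3:ℝ) • (Hxᵀ * (V⁻¹ * Hx))) ((-6:ℝ) • (Hxᵀ * V⁻¹))
      ((-6:ℝ) • (V⁻¹ * Hx)) ((12:ℝ) • V⁻¹)) w =
      Sum.elim (((-6:ℝ) • (Hxᵀ * V⁻¹)).mulVec v) (((12:ℝ) • V⁻¹).mulVec v) := by
    ext (i | i) <;>
      simp [w, Matrix.mulVec, Matrix.fromBlocks, dotProduct, Sum.elim]
  rw [hmv]
  simp [w, dotProduct, Matrix.mulVec, Finset.mul_sum, mul_comm, mul_assoc, mul_left_comm]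
end

section
/- Let C be an invertible dX × dX real matrix, Hx a dY × dX matrix with V = Hx C Hx* invertible, and S = [[C, (1/2) C Hx*], [(1/2) Hx C, (1/3) V]]. Then for all a ∈ ℝ^{dX} and v ∈ ℝ^{dY}, the S^{-1}-bilinear form between the vectors (a, (1/2) Hx a) and (0, v) vanishes: (a, (1/2)Hx a)* S^{-1} (0, v) = 0. -/
open Matrix

theorem Sinv_orthogonality
    (dY dX : ℕ) (C : Matrix (Fin dX) (Fin dX) ℝ)
    (Hx : Matrix (Fin dY) (Fin dX) ℝ)
    (hC : IsUnit C.det) (hV : IsUnit (Hx * C * Hxᵀ).det)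
    (a : Fin dX → ℝ) (v : Fin dY → ℝ) :
    let V : Matrix (Fin dY) (Fin dY) ℝ := Hx * C * Hxᵀ
    let S : Matrix (Fin dX ⊕ Fin dY) (Fin dX ⊕ Fin dY) ℝ :=
      Matrix.fromBlocks C ((1/2 : ℝ) • (C * Hxᵀ)) ((1/2 : ℝ) • (Hx * C)) ((1/3 : ℝ) • V)
    (Sum.elim a ((1/2 : ℝ) • Hx.mulVec a)) ⬝ᵥ S⁻¹.mulVec (Sum.elim 0 v) = 0 := by
  intro V S
  have hCi : Invertible C := C.invertibleOfIsUnitDet hC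
  set q : Fin dY → ℝ := V⁻¹.mulVec v with hq
  set u : Fin dX ⊕ Fin dY → ℝ :=
    Sum.elim ((-6 : ℝ) • Hxᵀ.mulVec q) ((12 : ℝ) • q) with hu
  have hVq : V.mulVec q = v := by
    rw [hq, Matrix.mulVec_mulVec, Matrix.mul_nonsing_inv _ hV, Matrix.one_mulVec]
  have hVassoc : V = Hx * (C * Hxᵀ) := Matrix.mul_assoc _ _ _
  have hSu : S.mulVec u = Sum.elim (0 : Fin dX → ℝ) v := by
    rw [hu, Matrix.fromBlocks_mulVec]
    simp only [Sum.elim_comp_inl, Sum.elim_comp_inr]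
    refine congrArg₂ Sum.elim ?_ ?_
    · rw [Matrix.mulVec_smul, Matrix.mulVec_smul, Matrix.smul_mulVec,
        ← Matrix.mulVec_mulVec]
      module
    · rw [Matrix.mulVec_smul, Matrix.mulVec_smul, Matrix.smul_mulVec,
        Matrix.smul_mulVec, Matrix.mulVec_mulVec, hVq]
      module
  have hSchur : (1/3 : ℝ) • V - ((1/2 : ℝ) • (Hx * C)) * ⅟C * ((1/2 : ℝ) • (C * Hxᵀ))
      = (1/12 : ℝ) • V := by
    rw [invOf_eq_nonsing_inv]
    have hcc : Hx * C * C⁻¹ = Hx := by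
      rw [Matrix.mul_assoc, Matrix.mul_nonsing_inv _ hC, Matrix.mul_one]
    rw [Matrix.smul_mul, Matrix.smul_mul, Matrix.mul_smul, hcc, ← hVassoc]
    module
  have hSdet : IsUnit S.det := by
    rw [Matrix.det_fromBlocks₁₁, hSchur, Matrix.det_smul, Fintype.card_fin]
    exact hC.mul ((isUnit_iff_ne_zero.2 (by norm_num : ((1/12:ℝ))^dY ≠ 0)).mul hV)
  have hSinv : S⁻¹.mulVec (Sum.elim 0 v) = u := by
    rw [← hSu, Matrix.mulVec_mulVec, Matrix.nonsing_inv_mul _ hSdet, Matrix.one_mulVec]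
  rw [hSinv, hu, sumElim_dotProduct_sumElim]
  rw [dotProduct_smul, dotProduct_smul, smul_dotProduct,
    Matrix.dotProduct_mulVec, Matrix.vecMul_transpose]
  simp only [smul_eq_mul]
  ring
end

section
/- Let C be an invertible dX × dX real matrix, Hx a dY × dX matrix with V = Hx C Hx* invertible, and S = [[C, (1/2) C Hx*], [(1/2) Hx C, (1/3) V]]. Then for every a ∈ ℝ^{dX}, the quadratic form of S^{-1} at the vector (a, (1/2) Hx a) equals a* C^{-1} a. -/
/-! The vector `w = (a, ½ Hx a)` is `S (C⁻¹ a, 0)`, because the lower-left block of `S` is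
`½ Hx C`. Hence `S⁻¹ w = (C⁻¹ a, 0)` and `w ⬝ S⁻¹ w = a ⬝ C⁻¹ a`. `S` is invertible since the
Schur complement of `C` in it is `⅓ V - ¼ V = V / 12`. -/

open Matrix

namespace Matrix

variable {m n K : Type*} [Fintype m] [Fintype n] [DecidableEq m] [Field K]

theorem fromBlocks_mulVec_sumElim_inv_mulVec_zero {A : Matrix m m K} (B : Matrix m n K)
    (C : Matrix n m K) (D : Matrix n n K) (hA : IsUnit A.det) (a : m → K) :
    fromBlocks A B C D *ᵥ Sum.elim (A⁻¹ *ᵥ a) 0 = Sum.elim a (C *ᵥ A⁻¹ *ᵥ a) := by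
  simp [fromBlocks_mulVec, mulVec_mulVec, mul_nonsing_inv A hA]

theorem sumElim_dotProduct_fromBlocks_inv_mulVec [DecidableEq n] {A : Matrix m m K}
    {B : Matrix m n K} {C : Matrix n m K} {D : Matrix n n K} (hA : IsUnit A.det)
    (hS : IsUnit (fromBlocks A B C D).det) (a : m → K) :
    Sum.elim a (C *ᵥ A⁻¹ *ᵥ a) ⬝ᵥ (fromBlocks A B C D)⁻¹ *ᵥ Sum.elim a (C *ᵥ A⁻¹ *ᵥ a) =
      a ⬝ᵥ A⁻¹ *ᵥ a := by
  let := invertibleOfIsUnitDet _ hS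
  rw [inv_mulVec_eq_vec (fromBlocks_mulVec_sumElim_inv_mulVec_zero B C D hA a).symm]
  simp [dotProduct, Fintype.sum_sum_type]

end Matrix

theorem quadratic_form_drift
    (dY dX : ℕ) (C : Matrix (Fin dX) (Fin dX) ℝ)
    (Hx : Matrix (Fin dY) (Fin dX) ℝ)
    (hC : IsUnit C.det) (hV : IsUnit (Hx * C * Hxᵀ).det)
    (a : Fin dX → ℝ) :
    let V : Matrix (Fin dY) (Fin dY) ℝ := Hx * C * Hxᵀ
    let S : Matrix (Fin dX ⊕ Fin dY) (Fin dX ⊕ Fin dY) ℝ :=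
      Matrix.fromBlocks C ((1/2 : ℝ) • (C * Hxᵀ)) ((1/2 : ℝ) • (Hx * C)) ((1/3 : ℝ) • V)
    let w : (Fin dX ⊕ Fin dY) → ℝ := Sum.elim a ((1/2 : ℝ) • Hx.mulVec a)
    w ⬝ᵥ S⁻¹.mulVec w = a ⬝ᵥ C⁻¹.mulVec a := by
  intro V S w
  let := C.invertibleOfIsUnitDet hC
  have hSchur : (1/3 : ℝ) • V - ((1/2 : ℝ) • (Hx * C)) * ⅟C * ((1/2 : ℝ) • (C * Hxᵀ)) =
      (1/12 : ℝ) • V := by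
    rw [smul_mul, smul_mul, Matrix.mul_smul, smul_smul, invOf_eq_nonsing_inv,
      mul_nonsing_inv_cancel_right _ _ hC, ← Matrix.mul_assoc, ← sub_smul]
    norm_num
  have hS : IsUnit S.det := by
    rw [det_fromBlocks₁₁, hSchur, det_smul]
    exact hC.mul ((IsUnit.pow _ (by norm_num)).mul hV)
  have hw : w = Sum.elim a (((1/2 : ℝ) • (Hx * C)) *ᵥ C⁻¹ *ᵥ a) := by
    rw [smul_mulVec, mulVec_mulVec, mul_nonsing_inv_cancel_right _ _ hC]
  rw [hw]
  exact sumElim_dotProduct_fromBlocks_inv_mulVec hC hS a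
end

section
/- Let C₀ and C₁ be invertible dX × dX real matrices and Hx a dY × dX matrix such that V₀ = Hx C₀ Hx* and V₁ = Hx C₁ Hx* are invertible. Define S_i = [[C_i, (1/2) C_i Hx*], [(1/2) Hx C_i, (1/3) V_i]] for i = 0,1. Then Tr(S₁^{-1} S₀) = Tr(C₁^{-1} C₀) + Tr(V₁^{-1} V₀). -/
open Matrix

lemma trace_fromBlocks_aux {m n : ℕ} (A : Matrix (Fin m) (Fin m) ℝ)
    (B : Matrix (Fin m) (Fin n) ℝ) (C : Matrix (Fin n) (Fin m) ℝ)
    (D : Matrix (Fin n) (Fin n) ℝ) :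
    (Matrix.fromBlocks A B C D).trace = A.trace + D.trace := by
  simp [Matrix.trace, Fintype.sum_sum_type, Matrix.diag]

theorem trace_S_inv_S
    (dY dX : ℕ) (C₀ C₁ : Matrix (Fin dX) (Fin dX) ℝ)
    (Hx : Matrix (Fin dY) (Fin dX) ℝ)
    (hC0 : IsUnit C₀.det) (hC1 : IsUnit C₁.det)
    (hV0 : IsUnit (Hx * C₀ * Hxᵀ).det) (hV1 : IsUnit (Hx * C₁ * Hxᵀ).det) :
    let V₀ : Matrix (Fin dY) (Fin dY) ℝ := Hx * C₀ * Hxᵀ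
    let V₁ : Matrix (Fin dY) (Fin dY) ℝ := Hx * C₁ * Hxᵀ
    let S₀ : Matrix (Fin dX ⊕ Fin dY) (Fin dX ⊕ Fin dY) ℝ :=
      Matrix.fromBlocks C₀ ((1/2 : ℝ) • (C₀ * Hxᵀ)) ((1/2 : ℝ) • (Hx * C₀)) ((1/3 : ℝ) • V₀)
    let S₁ : Matrix (Fin dX ⊕ Fin dY) (Fin dX ⊕ Fin dY) ℝ :=
      Matrix.fromBlocks C₁ ((1/2 : ℝ) • (C₁ * Hxᵀ)) ((1/2 : ℝ) • (Hx * C₁)) ((1/3 : ℝ) • V₁)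
    (S₁⁻¹ * S₀).trace = (C₁⁻¹ * C₀).trace + (V₁⁻¹ * V₀).trace := by
  intro V₀ V₁ S₀ S₁
  set N : Matrix (Fin dX ⊕ Fin dY) (Fin dX ⊕ Fin dY) ℝ :=
    Matrix.fromBlocks (C₁⁻¹ + (3 : ℝ) • (Hxᵀ * V₁⁻¹ * Hx)) ((-6 : ℝ) • (Hxᵀ * V₁⁻¹))
      ((-6 : ℝ) • (V₁⁻¹ * Hx)) ((12 : ℝ) • V₁⁻¹) with hN
  have hC1inv : C₁ * C₁⁻¹ = 1 := mul_nonsing_inv _ hC1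
  have hV1inv : V₁ * V₁⁻¹ = 1 := mul_nonsing_inv _ hV1
  have hV1 : (Hx * C₁ * Hxᵀ : Matrix (Fin dY) (Fin dY) ℝ) = V₁ := rfl
  have hV0 : (Hx * C₀ * Hxᵀ : Matrix (Fin dY) (Fin dY) ℝ) = V₀ := rfl
  have h11 : C₁ * (C₁⁻¹ + (3 : ℝ) • (Hxᵀ * V₁⁻¹ * Hx)) +
      ((1/2 : ℝ) • (C₁ * Hxᵀ)) * ((-6 : ℝ) • (V₁⁻¹ * Hx)) = 1 := by
    rw [Matrix.mul_add, hC1inv]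
    simp only [Matrix.mul_smul, Matrix.smul_mul, smul_smul]
    rw [show C₁ * (Hxᵀ * V₁⁻¹ * Hx) = C₁ * Hxᵀ * (V₁⁻¹ * Hx) by simp [Matrix.mul_assoc]]
    norm_num
  have h12 : C₁ * ((-6 : ℝ) • (Hxᵀ * V₁⁻¹)) +
      ((1/2 : ℝ) • (C₁ * Hxᵀ)) * ((12 : ℝ) • V₁⁻¹) = 0 := by
    simp only [Matrix.mul_smul, Matrix.smul_mul, smul_smul]
    rw [show C₁ * (Hxᵀ * V₁⁻¹) = C₁ * Hxᵀ * V₁⁻¹ by simp [Matrix.mul_assoc]]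
    norm_num
  have h21 : ((1/2 : ℝ) • (Hx * C₁)) * (C₁⁻¹ + (3 : ℝ) • (Hxᵀ * V₁⁻¹ * Hx)) +
      ((1/3 : ℝ) • V₁) * ((-6 : ℝ) • (V₁⁻¹ * Hx)) = 0 := by
    rw [Matrix.smul_mul, Matrix.mul_add]
    simp only [Matrix.mul_smul, Matrix.smul_mul, smul_smul]
    rw [show Hx * C₁ * (Hxᵀ * V₁⁻¹ * Hx) = (Hx * C₁ * Hxᵀ) * V₁⁻¹ * Hx by
      simp [Matrix.mul_assoc]]
    rw [hV1, show V₁ * V₁⁻¹ * Hx = Hx by rw [hV1inv, Matrix.one_mul]]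
    rw [show V₁ * (V₁⁻¹ * Hx) = Hx by rw [← Matrix.mul_assoc, hV1inv, Matrix.one_mul]]
    rw [show Hx * C₁ * C₁⁻¹ = Hx by rw [Matrix.mul_assoc, hC1inv, Matrix.mul_one]]
    module
  have h22 : ((1/2 : ℝ) • (Hx * C₁)) * ((-6 : ℝ) • (Hxᵀ * V₁⁻¹)) +
      ((1/3 : ℝ) • V₁) * ((12 : ℝ) • V₁⁻¹) = 1 := by
    simp only [Matrix.mul_smul, Matrix.smul_mul, smul_smul]
    rw [show Hx * C₁ * (Hxᵀ * V₁⁻¹) = (Hx * C₁ * Hxᵀ) * V₁⁻¹ by simp [Matrix.mul_assoc]]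
    rw [hV1, hV1inv]
    norm_num
    module
  have key : S₁ * N = 1 := by
    show Matrix.fromBlocks C₁ ((1/2 : ℝ) • (C₁ * Hxᵀ)) ((1/2 : ℝ) • (Hx * C₁)) ((1/3 : ℝ) • V₁)
        * N = 1
    rw [hN, Matrix.fromBlocks_multiply, h11, h12, h21, h22, Matrix.fromBlocks_one]
  have hS1inv : S₁⁻¹ = N := inv_eq_right_inv key
  have t11 : (C₁⁻¹ + (3 : ℝ) • (Hxᵀ * V₁⁻¹ * Hx)) * C₀ +
      ((-6 : ℝ) • (Hxᵀ * V₁⁻¹)) * ((1/2 : ℝ) • (Hx * C₀)) = C₁⁻¹ * C₀ := by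
    rw [Matrix.add_mul]
    simp only [Matrix.mul_smul, Matrix.smul_mul, smul_smul]
    rw [show Hxᵀ * V₁⁻¹ * Hx * C₀ = Hxᵀ * V₁⁻¹ * (Hx * C₀) by simp [Matrix.mul_assoc]]
    module
  have t22 : ((-6 : ℝ) • (V₁⁻¹ * Hx)) * ((1/2 : ℝ) • (C₀ * Hxᵀ)) +
      ((12 : ℝ) • V₁⁻¹) * ((1/3 : ℝ) • V₀) = V₁⁻¹ * V₀ := by
    simp only [Matrix.mul_smul, Matrix.smul_mul, smul_smul]
    rw [show V₁⁻¹ * Hx * (C₀ * Hxᵀ) = V₁⁻¹ * (Hx * C₀ * Hxᵀ) by simp [Matrix.mul_assoc]]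
    rw [hV0]
    norm_num
    module
  rw [hS1inv]
  show (N * Matrix.fromBlocks C₀ ((1/2 : ℝ) • (C₀ * Hxᵀ)) ((1/2 : ℝ) • (Hx * C₀))
      ((1/3 : ℝ) • V₀)).trace = _
  rw [hN, Matrix.fromBlocks_multiply, t11, t22, trace_fromBlocks_aux]
end

section
/- Let C₀ and C₁ be symmetric positive definite dX × dX real matrices and Hx a dY × dX matrix of rank dY, with V_i = Hx C_i Hx* and S_i = [[C_i, (1/2) C_i Hx*], [(1/2) Hx C_i, (1/3) V_i]] for i = 0,1. Then Tr(C₁^{-1} C₀) + Tr(V₁^{-1} V₀) − (dX + dY) + log( (det C₁ · det V₁) / (det C₀ · det V₀) ) = Tr(S₁^{-1} S₀) − (dX + dY) + log( det S₁ / det S₀ ). -/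
/-! Write `P = [[1, 0], [½ Hx, 1]]`, so that `det P = 1`, and `Dᵢ = diag(Cᵢ, Vᵢ / 12)`; the entry
`1/12 = 1/3 − (1/2)²` is the Schur complement coefficient of `Cᵢ` in `Sᵢ`. Then `Sᵢ = P Dᵢ Pᵀ`.
Consequently `S₁⁻¹ S₀` is similar to `D₁⁻¹ D₀`, whose trace is `Tr(C₁⁻¹C₀) + Tr(V₁⁻¹V₀)`, and
`det Sᵢ = 12^{-dY} det Cᵢ det Vᵢ`, where the factor `12^{-dY}` cancels in `det S₁ / det S₀`.
Invertibility of `V₁` comes from `Hx` having independent rows. -/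

open Matrix

namespace Matrix

variable {m n R : Type*} [Fintype m] [Fintype n]

theorem linearIndependent_row_of_rank_eq_card [Field R] {A : Matrix m n R}
    (h : A.rank = Fintype.card m) : LinearIndependent R A.row := by
  rw [linearIndependent_iff_card_eq_finrank_span, Set.finrank, ← rank_eq_finrank_span_row, h]

theorem PosDef.mul_mul_transpose_of_rank_eq_card {C : Matrix n n ℝ} (hC : C.PosDef)
    {H : Matrix m n ℝ} (hH : H.rank = Fintype.card m) : (H * C * Hᵀ).PosDef := by
  simpa using hC.mul_mul_conjTranspose_same
    (vecMul_injective_iff.2 (linearIndependent_row_of_rank_eq_card hH))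

theorem trace_fromBlocks [AddCommMonoid R] (A : Matrix n n R) (B : Matrix n m R)
    (C : Matrix m n R) (D : Matrix m m R) :
    (fromBlocks A B C D).trace = A.trace + D.trace := by
  simp [trace, Fintype.sum_sum_type]

theorem trace_inv_mul_conj [CommRing R] [DecidableEq n] {P Q : Matrix n n R}
    (hP : IsUnit P.det) (hQ : IsUnit Q.det) (A B : Matrix n n R) :
    ((P * A * Q)⁻¹ * (P * B * Q)).trace = (A⁻¹ * B).trace := by
  calc ((P * A * Q)⁻¹ * (P * B * Q)).trace
      = (Q⁻¹ * (A⁻¹ * (P⁻¹ * P) * B) * Q).trace := by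
        simp only [mul_inv_rev, Matrix.mul_assoc]
    _ = (A⁻¹ * B).trace := by
        rw [nonsing_inv_mul P hP, Matrix.mul_one, trace_mul_cycle, mul_nonsing_inv Q hQ,
          Matrix.one_mul]

theorem trace_inv_fromBlocks_diagonal_mul [Field R] [DecidableEq m] [DecidableEq n]
    {A : Matrix n n R} {D : Matrix m m R} (hA : IsUnit A) (hD : IsUnit D)
    (A' : Matrix n n R) (D' : Matrix m m R) :
    ((fromBlocks A 0 0 D)⁻¹ * fromBlocks A' 0 0 D').trace =
      (A⁻¹ * A').trace + (D⁻¹ * D').trace := by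
  rw [inv_fromBlocks_zero₁₂_of_isUnit_iff _ _ _ (iff_of_true hA hD), fromBlocks_multiply,
    trace_fromBlocks]
  simp

theorem inv_smul_mul_smul [Field R] [DecidableEq n] {A : Matrix n n R} (hA : IsUnit A.det)
    {c : R} (hc : c ≠ 0) (B : Matrix n n R) : (c • A)⁻¹ * (c • B) = A⁻¹ * B := by
  have := invertibleOfNonzero hc
  rw [inv_smul A c hA, Matrix.smul_mul, Matrix.mul_smul, smul_smul, invOf_mul_self, one_smul]

end Matrix

section JointCovariance

variable {m n : Type*} [Fintype m] [Fintype n]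

noncomputable def jointCovariance (C : Matrix n n ℝ) (H : Matrix m n ℝ) :
    Matrix (n ⊕ m) (n ⊕ m) ℝ :=
  fromBlocks C ((1/2 : ℝ) • (C * Hᵀ)) ((1/2 : ℝ) • (H * C)) ((1/3 : ℝ) • (H * C * Hᵀ))

variable [DecidableEq m] [DecidableEq n]

noncomputable def halfShear (H : Matrix m n ℝ) : Matrix (n ⊕ m) (n ⊕ m) ℝ :=
  fromBlocks 1 0 ((1/2 : ℝ) • H) 1

theorem det_halfShear (H : Matrix m n ℝ) : (halfShear H).det = 1 := by
  simp [halfShear]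

theorem jointCovariance_eq_halfShear_mul_mul_transpose (C : Matrix n n ℝ) (H : Matrix m n ℝ) :
    jointCovariance C H =
      halfShear H * fromBlocks C 0 0 ((1/12 : ℝ) • (H * C * Hᵀ)) * (halfShear H)ᵀ := by
  rw [jointCovariance, halfShear, fromBlocks_transpose, fromBlocks_multiply, fromBlocks_multiply]
  congr 1 <;> simp only [transpose_smul, transpose_one, transpose_zero, Matrix.smul_mul,
      Matrix.mul_smul, Matrix.zero_mul, Matrix.mul_zero, Matrix.one_mul, Matrix.mul_one,
      zero_add, add_zero, Matrix.mul_assoc] <;> module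

theorem det_jointCovariance (C : Matrix n n ℝ) (H : Matrix m n ℝ) :
    (jointCovariance C H).det = (1/12 : ℝ) ^ Fintype.card m * (C.det * (H * C * Hᵀ).det) := by
  rw [jointCovariance_eq_halfShear_mul_mul_transpose, det_mul, det_mul, det_transpose,
    det_halfShear, det_fromBlocks_zero₁₂, det_smul]
  ring

theorem det_jointCovariance_div (C₀ C₁ : Matrix n n ℝ) (H : Matrix m n ℝ) :
    (jointCovariance C₁ H).det / (jointCovariance C₀ H).det =
      (C₁.det * (H * C₁ * Hᵀ).det) / (C₀.det * (H * C₀ * Hᵀ).det) := by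
  rw [det_jointCovariance, det_jointCovariance, mul_div_mul_left _ _ (by positivity)]

theorem trace_inv_jointCovariance_mul {C₁ : Matrix n n ℝ} {H : Matrix m n ℝ}
    (hC₁ : IsUnit C₁) (hV₁ : IsUnit (H * C₁ * Hᵀ)) (C₀ : Matrix n n ℝ) :
    ((jointCovariance C₁ H)⁻¹ * jointCovariance C₀ H).trace =
      (C₁⁻¹ * C₀).trace + ((H * C₁ * Hᵀ)⁻¹ * (H * C₀ * Hᵀ)).trace := by
  have hP : IsUnit (halfShear H).det := by rw [det_halfShear]; exact isUnit_one
  have hPt : IsUnit (halfShear H)ᵀ.det := by rwa [det_transpose]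
  have hc : (1/12 : ℝ) ≠ 0 := by norm_num
  have hcV₁ : IsUnit ((1/12 : ℝ) • (H * C₁ * Hᵀ)) := by
    rw [isUnit_iff_isUnit_det, det_smul]
    exact (isUnit_iff_ne_zero.2 (pow_ne_zero _ hc)).mul ((isUnit_iff_isUnit_det _).1 hV₁)
  simp only [jointCovariance_eq_halfShear_mul_mul_transpose]
  rw [trace_inv_mul_conj hP hPt, trace_inv_fromBlocks_diagonal_mul hC₁ hcV₁,
    inv_smul_mul_smul ((isUnit_iff_isUnit_det _).1 hV₁) hc]

end JointCovariance

theorem joint_contrast_identity_general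
    (dY dX : ℕ) (C₀ C₁ : Matrix (Fin dX) (Fin dX) ℝ)
    (hC1 : C₁.PosDef)
    (Hx : Matrix (Fin dY) (Fin dX) ℝ) (hrank : Hx.rank = dY) :
    let V₀ : Matrix (Fin dY) (Fin dY) ℝ := Hx * C₀ * Hxᵀ
    let V₁ : Matrix (Fin dY) (Fin dY) ℝ := Hx * C₁ * Hxᵀ
    let S₀ : Matrix (Fin dX ⊕ Fin dY) (Fin dX ⊕ Fin dY) ℝ :=
      Matrix.fromBlocks C₀ ((1/2 : ℝ) • (C₀ * Hxᵀ)) ((1/2 : ℝ) • (Hx * C₀)) ((1/3 : ℝ) • V₀)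
    let S₁ : Matrix (Fin dX ⊕ Fin dY) (Fin dX ⊕ Fin dY) ℝ :=
      Matrix.fromBlocks C₁ ((1/2 : ℝ) • (C₁ * Hxᵀ)) ((1/2 : ℝ) • (Hx * C₁)) ((1/3 : ℝ) • V₁)
    (C₁⁻¹ * C₀).trace + (V₁⁻¹ * V₀).trace - (dX + dY : ℝ) +
        Real.log ((C₁.det * V₁.det) / (C₀.det * V₀.det)) =
      (S₁⁻¹ * S₀).trace - (dX + dY : ℝ) + Real.log (S₁.det / S₀.det) := by
  intro V₀ V₁ S₀ S₁
  have hV₁ : V₁.PosDef := hC1.mul_mul_transpose_of_rank_eq_card (by rwa [Fintype.card_fin])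
  have htrace : (S₁⁻¹ * S₀).trace = (C₁⁻¹ * C₀).trace + (V₁⁻¹ * V₀).trace :=
    trace_inv_jointCovariance_mul hC1.isUnit hV₁.isUnit C₀
  have hdet : S₁.det / S₀.det = (C₁.det * V₁.det) / (C₀.det * V₀.det) :=
    det_jointCovariance_div C₀ C₁ Hx
  rw [htrace, hdet]

theorem joint_contrast_identity
    (dY dX : ℕ) (C₀ C₁ : Matrix (Fin dX) (Fin dX) ℝ)
    (hC0 : C₀.PosDef) (hC1 : C₁.PosDef)
    (Hx : Matrix (Fin dY) (Fin dX) ℝ) (hrank : Hx.rank = dY) :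
    let V₀ : Matrix (Fin dY) (Fin dY) ℝ := Hx * C₀ * Hxᵀ
    let V₁ : Matrix (Fin dY) (Fin dY) ℝ := Hx * C₁ * Hxᵀ
    let S₀ : Matrix (Fin dX ⊕ Fin dY) (Fin dX ⊕ Fin dY) ℝ :=
      Matrix.fromBlocks C₀ ((1/2 : ℝ) • (C₀ * Hxᵀ)) ((1/2 : ℝ) • (Hx * C₀)) ((1/3 : ℝ) • V₀)
    let S₁ : Matrix (Fin dX ⊕ Fin dY) (Fin dX ⊕ Fin dY) ℝ :=
      Matrix.fromBlocks C₁ ((1/2 : ℝ) • (C₁ * Hxᵀ)) ((1/2 : ℝ) • (Hx * C₁)) ((1/3 : ℝ) • V₁)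
    (C₁⁻¹ * C₀).trace + (V₁⁻¹ * V₀).trace - (dX + dY : ℝ) +
        Real.log ((C₁.det * V₁.det) / (C₀.det * V₀.det)) =
      (S₁⁻¹ * S₀).trace - (dX + dY : ℝ) + Real.log (S₁.det / S₀.det) :=
  joint_contrast_identity_general dY dX C₀ C₁ hC1 Hx hrank
end
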